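/- arXiv:2108.01257 — 3 statements merged into one kernel-verified Lean document; each statement's English description precedes it below -/
import Mathlib

section
/- Let 𝔉_π and 𝔉_φ be real Hilbert spaces with continuous injective inclusions j₁ : 𝔉_π → L² and j₂ : L² → 𝔉_φ into and from a real Hilbert space L², and suppose there is a unitary β̄_{π,φ} : 𝔉_π → 𝔉_φ and a positive invertible operator ω such that (j₂f, β̄_{π,φ} g)_φ = (f, g)_{L²} for all f ∈ L², g ∈ 𝔉_π, with inverse β̄_{φ,π} = -(β̄_{π,φ})^{-1} satisfying β̄_{π,φ}∘β̄_{φ,π} = -1. For a closed subspace L²(B) ⊆ L² with orthogonal complement L²(B^c), define S_R(B) = closure of j₂L²(B) in 𝔉_φ and S_I(B) = β̄_{π,φ} j₁^{-1}(L²(B)). Then S_R(B)^{⊥_φ} = S_I(B^c) and S_I(B)^{⊥_φ} = S_R(B^c). -/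
open scoped RealInnerProductSpace

private lemma aux5 {Fpi Fphi L2 : Type*}
    [NormedAddCommGroup Fpi] [InnerProductSpace ℝ Fpi] [CompleteSpace Fpi]
    [NormedAddCommGroup Fphi] [InnerProductSpace ℝ Fphi] [CompleteSpace Fphi]
    [NormedAddCommGroup L2] [InnerProductSpace ℝ L2] [CompleteSpace L2]
    (j₁ : Fpi →L[ℝ] L2) (j₂ : L2 →L[ℝ] Fphi)
    (βbar : Fpi ≃ₗᵢ[ℝ] Fphi)
    (hpair : ∀ (f : L2) (g : Fpi), ⟪j₂ f, βbar g⟫ = ⟪f, j₁ g⟫)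
    (K : Submodule ℝ L2) :
    ((K.map j₂.toLinearMap).topologicalClosure)ᗮ
        = (Kᗮ.comap j₁.toLinearMap).map (βbar.toLinearEquiv : Fpi →ₗ[ℝ] Fphi) := by
  rw [← Submodule.orthogonal_orthogonal_eq_closure, Submodule.triorthogonal_eq_orthogonal]
  ext x
  constructor
  · intro hx
    refine ⟨βbar.symm x, ?_, by simp⟩
    intro f hf
    have := hx (j₂ f) ⟨f, hf, rfl⟩
    rw [real_inner_comm] at this
    have h2 := hpair f (βbar.symm x)
    simp only [LinearIsometryEquiv.apply_symm_apply] at h2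
    rw [real_inner_comm] at h2
    rw [ContinuousLinearMap.coe_coe, ← h2]
    exact this
  · rintro ⟨g, hg, rfl⟩
    intro y hy
    obtain ⟨f, hf, rfl⟩ := hy
    simp only [LinearEquiv.coe_coe, LinearIsometryEquiv.coe_toLinearEquiv,
      ContinuousLinearMap.coe_coe]
    have h3 : ⟪j₂ f, βbar g⟫ = 0 :=
      (hpair f g).trans ((Submodule.mem_orthogonal _ _).1 hg f hf)
    exact h3

theorem stmt5 {Fpi Fphi L2 : Type*}
    [NormedAddCommGroup Fpi] [InnerProductSpace ℝ Fpi] [CompleteSpace Fpi]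
    [NormedAddCommGroup Fphi] [InnerProductSpace ℝ Fphi] [CompleteSpace Fphi]
    [NormedAddCommGroup L2] [InnerProductSpace ℝ L2] [CompleteSpace L2]
    (j₁ : Fpi →L[ℝ] L2) (j₂ : L2 →L[ℝ] Fphi)
    (hj₁ : Function.Injective j₁) (hj₂ : Function.Injective j₂)
    (hd₁ : DenseRange j₁) (hd₂ : DenseRange j₂)
    (βbar : Fpi ≃ₗᵢ[ℝ] Fphi)
    (hpair : ∀ (f : L2) (g : Fpi), ⟪j₂ f, βbar g⟫ = ⟪f, j₁ g⟫)
    (LB : Submodule ℝ L2) (hLB : IsClosed (LB : Set L2)) :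
    ((LB.map j₂.toLinearMap).topologicalClosure)ᗮ
        = (LBᗮ.comap j₁.toLinearMap).map (βbar.toLinearEquiv : Fpi →ₗ[ℝ] Fphi)
      ∧ ((LB.comap j₁.toLinearMap).map (βbar.toLinearEquiv : Fpi →ₗ[ℝ] Fphi))ᗮ
        = (LBᗮ.map j₂.toLinearMap).topologicalClosure := by
  refine ⟨aux5 j₁ j₂ βbar hpair LB, ?_⟩
  have h := aux5 j₁ j₂ βbar hpair LBᗮ
  haveI : CompleteSpace LB := hLB.completeSpace_coe
  rw [Submodule.orthogonal_orthogonal] at h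
  rw [← h]
  have : CompleteSpace ((LBᗮ.map j₂.toLinearMap).topologicalClosure) :=
    (Submodule.isClosed_topologicalClosure _).completeSpace_coe
  rw [Submodule.orthogonal_orthogonal]
end

section
/- Let K be a real Hilbert space and K₁, K₂ closed subspaces of K. If there is an orthogonal decomposition H = K ⊕ βK with complex structure β, and S := K₁ + βK₂ ⊆ H, then the symplectic complement S' of S satisfies S' = (K₂^⊥ in K) + β(K₁^⊥ in K), where ⊥ denotes orthogonal complement within K. -/
open scoped RealInnerProductSpace

theorem stmt6 {H : Type*} [NormedAddCommGroup H] [InnerProductSpace ℝ H] [CompleteSpace H]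
    (β : H →L[ℝ] H) (hβ2 : ∀ h : H, β (β h) = -h)
    (hβadj : ∀ h₁ h₂ : H, ⟪β h₁, h₂⟫ = -⟪h₁, β h₂⟫)
    (K K₁ K₂ : Submodule ℝ H)
    (hK : IsClosed (K : Set H)) (hK₁c : IsClosed (K₁ : Set H)) (hK₂c : IsClosed (K₂ : Set H))
    (hK₁ : K₁ ≤ K) (hK₂ : K₂ ≤ K)
    (horth : ∀ x ∈ K, ∀ y ∈ K, ⟪x, β y⟫ = 0)
    (hsum : K ⊔ K.map β.toLinearMap = ⊤) :
    {h : H | ∀ a ∈ K₁, ∀ b ∈ K₂, ⟪h, β (a + β b)⟫ = 0}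
      = {h : H | ∃ u ∈ K, ∃ v ∈ K, (∀ c ∈ K₂, ⟪u, c⟫ = 0) ∧ (∀ c ∈ K₁, ⟪v, c⟫ = 0) ∧
          h = u + β v} := by
  have hββ : ∀ v a : H, ⟪β v, β a⟫ = ⟪v, a⟫ := by
    intro v a
    rw [hβadj, hβ2, inner_neg_right, neg_neg]
  ext h
  simp only [Set.mem_setOf_eq]
  constructor
  · intro hh
    -- decompose h
    have : h ∈ K ⊔ K.map β.toLinearMap := by rw [hsum]; trivial
    rcases Submodule.mem_sup.mp this with ⟨u, hu, w, hw, huw⟩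
    rcases Submodule.mem_map.mp hw with ⟨v, hv, rfl⟩
    simp only [ContinuousLinearMap.coe_coe] at huw
    have hβa : ∀ a ∈ K₁, ⟪h, β a⟫ = 0 := by
      intro a ha
      have := hh a ha 0 K₂.zero_mem
      simpa using this
    have hb : ∀ b ∈ K₂, ⟪h, b⟫ = 0 := by
      intro b hb
      have := hh 0 K₁.zero_mem b hb
      simp only [map_zero, zero_add, hβ2, inner_neg_right] at this
      linarith
    refine ⟨u, hu, v, hv, ?_, ?_, huw.symm⟩
    · intro c hc
      have h1 : ⟪β v, c⟫ = 0 := by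
        rw [real_inner_comm]; exact horth c (hK₂ hc) v hv
      have h2 := hb c hc
      rw [← huw, inner_add_left, h1, add_zero] at h2
      exact h2
    · intro c hc
      have h1 : ⟪u, β c⟫ = 0 := horth u hu c (hK₁ hc)
      have h2 := hβa c hc
      rw [← huw, inner_add_left, h1, zero_add, hββ] at h2
      exact h2
  · rintro ⟨u, hu, v, hv, hu2, hv2, rfl⟩
    intro a ha b hb
    rw [map_add, hβ2, inner_add_right, inner_add_left, inner_add_left,
      hββ, horth u hu a (hK₁ ha), inner_neg_right, inner_neg_right,
      hu2 b hb, hv2 a ha]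
    have : ⟪β v, b⟫ = 0 := by
      rw [real_inner_comm]; exact horth b (hK₂ hb) v hv
    rw [this]; ring
end

section
/- Let 𝒦 be a Hilbert space and T a self-adjoint injective positive contraction with 1-T injective. Then the pairs of subspaces Γ(T) and Γ(-T) of 𝒦 ⊕ 𝒦 are in generic position: Γ(T) ∩ Γ(-T) = 0, Γ(T) ∩ Γ(-T)^⊥ = 0, Γ(T)^⊥ ∩ Γ(-T) = 0, and Γ(T)^⊥ ∩ Γ(-T)^⊥ = 0. -/
/-!
Write a vector of `𝒦 ⊕ 𝒦` as `(x, y)`. Then `Γ(T)` is `y = T x` and, since `T` is self-adjoint,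
`Γ(T)ᗮ` is `x = -T y`. In each of the four intersections the two equations force either
`T x = -T x`, which `ker T = 0` excludes, or `T (T x) = x`, which is excluded because
`1 - T² = (1 - T)(1 + T)` with `1 - T` injective by hypothesis and `1 + T` injective by positivity.
-/

open scoped ComplexInnerProductSpace

/-- The graph of a continuous linear operator, as a subspace of the Hilbert-space
direct sum `𝒦 ⊕₂ 𝒦`. -/
noncomputable def graphL2 {𝒦 : Type*} [NormedAddCommGroup 𝒦] [InnerProductSpace ℂ 𝒦]
    (T : 𝒦 →L[ℂ] 𝒦) : Submodule ℂ (WithLp 2 (𝒦 × 𝒦)) :=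
  (LinearMap.graph (T : 𝒦 →ₗ[ℂ] 𝒦)).comap (WithLp.linearEquiv 2 ℂ (𝒦 × 𝒦)).toLinearMap

section

variable {𝒦 : Type*} [NormedAddCommGroup 𝒦] [InnerProductSpace ℂ 𝒦] {T : 𝒦 →L[ℂ] 𝒦}

namespace ContinuousLinearMap

lemma eq_zero_of_add_apply_eq_zero (hpos : ∀ x : 𝒦, 0 ≤ (⟪T x, x⟫).re)
    {x : 𝒦} (hx : x + T x = 0) : x = 0 := by
  have hre : (⟪x + T x, x⟫).re = ‖x‖ ^ 2 + (⟪T x, x⟫).re := by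
    rw [inner_add_left, Complex.add_re, ← RCLike.re_to_complex, inner_self_eq_norm_sq]
  rw [hx, inner_zero_left, Complex.zero_re] at hre
  have := hpos x
  exact norm_eq_zero.1 (by nlinarith [norm_nonneg x])

lemma eq_zero_of_apply_apply_eq_self (hpos : ∀ x : 𝒦, 0 ≤ (⟪T x, x⟫).re)
    (hker1 : LinearMap.ker ((1 - T : 𝒦 →L[ℂ] 𝒦) : 𝒦 →ₗ[ℂ] 𝒦) = ⊥)
    {x : 𝒦} (hx : T (T x) = x) : x = 0 := by
  refine eq_zero_of_add_apply_eq_zero hpos (LinearMap.ker_eq_bot'.1 hker1 _ ?_)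
  rw [coe_coe, sub_apply, one_apply_eq_self, map_add, hx]
  abel

end ContinuousLinearMap

open ContinuousLinearMap

lemma toLp_mem_graphL2 {x y : 𝒦} : WithLp.toLp 2 (x, y) ∈ graphL2 T ↔ y = T x := Iff.rfl

lemma graphL2_inf_graphL2_neg (hker : LinearMap.ker (T : 𝒦 →ₗ[ℂ] 𝒦) = ⊥) :
    graphL2 T ⊓ graphL2 (-T) = ⊥ := by
  rw [Submodule.eq_bot_iff]
  rintro ⟨x, y⟩ hv
  obtain ⟨hy, hy'⟩ := Submodule.mem_inf.1 hv
  rw [toLp_mem_graphL2] at hy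
  rw [toLp_mem_graphL2, neg_apply] at hy'
  have hTx : T x = 0 := by linear_combination (norm := module) (-2⁻¹ : ℂ) • (hy'.symm.trans hy)
  have hx : x = 0 := LinearMap.ker_eq_bot'.1 hker x hTx
  simp [hx, hy]

variable [CompleteSpace 𝒦]

lemma toLp_mem_orthogonal_graphL2 {x y : 𝒦} :
    WithLp.toLp 2 (x, y) ∈ (graphL2 T)ᗮ ↔ x = -adjoint T y := by
  have hinner (u : 𝒦) :
      ⟪WithLp.toLp 2 (u, T u), WithLp.toLp 2 (x, y)⟫ = ⟪u, x + adjoint T y⟫ := by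
    rw [WithLp.prod_inner_apply, inner_add_right, adjoint_inner_right]
  rw [eq_neg_iff_add_eq_zero, Submodule.mem_orthogonal]
  constructor
  · intro h
    exact ext_inner_left ℂ fun u => by
      rw [← hinner, h _ (toLp_mem_graphL2.2 rfl), inner_zero_right]
  · rintro h ⟨u, v⟩ (rfl : v = T u)
    rw [hinner, h, inner_zero_right]

lemma graphL2_inf_orthogonal_graphL2_neg (hT : IsSelfAdjoint T)
    (hpos : ∀ x : 𝒦, 0 ≤ (⟪T x, x⟫).re)
    (hker1 : LinearMap.ker ((1 - T : 𝒦 →L[ℂ] 𝒦) : 𝒦 →ₗ[ℂ] 𝒦) = ⊥) :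
    graphL2 T ⊓ (graphL2 (-T))ᗮ = ⊥ := by
  rw [Submodule.eq_bot_iff]
  rintro ⟨x, y⟩ hv
  obtain ⟨hy, hx⟩ := Submodule.mem_inf.1 hv
  rw [toLp_mem_graphL2] at hy
  rw [toLp_mem_orthogonal_graphL2, map_neg, hT.adjoint_eq, neg_apply, neg_neg] at hx
  have hx0 : x = 0 := eq_zero_of_apply_apply_eq_self hpos hker1 (by rw [← hy, hx])
  simp [hx0, hy]

lemma orthogonal_graphL2_inf_graphL2_neg (hT : IsSelfAdjoint T)
    (hpos : ∀ x : 𝒦, 0 ≤ (⟪T x, x⟫).re)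
    (hker1 : LinearMap.ker ((1 - T : 𝒦 →L[ℂ] 𝒦) : 𝒦 →ₗ[ℂ] 𝒦) = ⊥) :
    (graphL2 T)ᗮ ⊓ graphL2 (-T) = ⊥ := by
  rw [Submodule.eq_bot_iff]
  rintro ⟨x, y⟩ hv
  obtain ⟨hx, hy⟩ := Submodule.mem_inf.1 hv
  rw [toLp_mem_orthogonal_graphL2, hT.adjoint_eq] at hx
  rw [toLp_mem_graphL2, neg_apply, hx, map_neg, neg_neg] at hy
  have hy0 : y = 0 := eq_zero_of_apply_apply_eq_self hpos hker1 hy.symm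
  simp [hx, hy0]

lemma orthogonal_graphL2_inf_orthogonal_graphL2_neg (hT : IsSelfAdjoint T)
    (hker : LinearMap.ker (T : 𝒦 →ₗ[ℂ] 𝒦) = ⊥) :
    (graphL2 T)ᗮ ⊓ (graphL2 (-T))ᗮ = ⊥ := by
  rw [Submodule.eq_bot_iff]
  rintro ⟨x, y⟩ hv
  obtain ⟨hx, hx'⟩ := Submodule.mem_inf.1 hv
  rw [toLp_mem_orthogonal_graphL2, hT.adjoint_eq] at hx
  rw [toLp_mem_orthogonal_graphL2, map_neg, hT.adjoint_eq, neg_apply, neg_neg] at hx'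
  have hTy : T y = 0 := by linear_combination (norm := module) (-2⁻¹ : ℂ) • (hx.symm.trans hx')
  have hy : y = 0 := LinearMap.ker_eq_bot'.1 hker y hTy
  simp [hx, hy]

end

theorem stmt8_general {𝒦 : Type*} [NormedAddCommGroup 𝒦] [InnerProductSpace ℂ 𝒦] [CompleteSpace 𝒦]
    (T : 𝒦 →L[ℂ] 𝒦) (hT : IsSelfAdjoint T)
    (hpos : ∀ x : 𝒦, 0 ≤ (⟪T x, x⟫).re)
    (hker : LinearMap.ker (T : 𝒦 →ₗ[ℂ] 𝒦) = ⊥)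
    (hker1 : LinearMap.ker ((1 - T : 𝒦 →L[ℂ] 𝒦) : 𝒦 →ₗ[ℂ] 𝒦) = ⊥) :
    graphL2 T ⊓ graphL2 (-T) = ⊥ ∧
    graphL2 T ⊓ (graphL2 (-T))ᗮ = ⊥ ∧
    (graphL2 T)ᗮ ⊓ graphL2 (-T) = ⊥ ∧
    (graphL2 T)ᗮ ⊓ (graphL2 (-T))ᗮ = ⊥ :=
  ⟨graphL2_inf_graphL2_neg hker, graphL2_inf_orthogonal_graphL2_neg hT hpos hker1,
    orthogonal_graphL2_inf_graphL2_neg hT hpos hker1,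
    orthogonal_graphL2_inf_orthogonal_graphL2_neg hT hker⟩

theorem stmt8 {𝒦 : Type*} [NormedAddCommGroup 𝒦] [InnerProductSpace ℂ 𝒦] [CompleteSpace 𝒦]
    (T : 𝒦 →L[ℂ] 𝒦) (hT : IsSelfAdjoint T)
    (hpos : ∀ x : 𝒦, 0 ≤ (⟪T x, x⟫).re) (hcontr : ‖T‖ ≤ 1)
    (hker : LinearMap.ker (T : 𝒦 →ₗ[ℂ] 𝒦) = ⊥)
    (hker1 : LinearMap.ker ((1 - T : 𝒦 →L[ℂ] 𝒦) : 𝒦 →ₗ[ℂ] 𝒦) = ⊥) :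
    graphL2 T ⊓ graphL2 (-T) = ⊥ ∧
    graphL2 T ⊓ (graphL2 (-T))ᗮ = ⊥ ∧
    (graphL2 T)ᗮ ⊓ graphL2 (-T) = ⊥ ∧
    (graphL2 T)ᗮ ⊓ (graphL2 (-T))ᗮ = ⊥ :=
  stmt8_general T hT hpos hker hker1
end
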